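/- For a generalized Euclidean distance matrix D built from L with parameters a, b, the null space of D equals the null space of E := L̃J + JL̃ - 2L, where L̃ = Diag(diag(L)) and J = 11'. In particular null(D) is independent of a and b. -/

import Mathlib

/-!
Write `d = diag L ≥ 0`, `s = ∑ xⱼ`, `t = d ⬝ x`, so that
`(αL̃J + βJL̃ - γL) x = α s d + β t 1 - γ L x`. If this vanishes, pairing with `1`
(recall `1ᵀL = 0`) and with `x` gives `α s tr L + n β t = 0` and `(α + β) s t = γ xᵀLx ≥ 0`.
Hence `α s² tr L = -n β s t ≤ 0`, so `s d = 0`; then `s t = 0`, so `xᵀLx = 0`, i.e. `L x = 0`,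
and finally `t = 0`. The resulting description of the kernel (`L x = 0`, `s d = 0`, `t 1 = 0`)
does not involve the weights `α, β, γ > 0`.
-/

open Matrix

namespace Matrix

variable {ι : Type*} [Fintype ι]

lemma IsSymm.one_dotProduct_mulVec_eq_zero {L : Matrix ι ι ℝ} (hL : L.IsSymm)
    (hL1 : L *ᵥ 1 = 0) (x : ι → ℝ) : 1 ⬝ᵥ L *ᵥ x = 0 := by
  rw [dotProduct_mulVec, ← mulVec_transpose, hL.eq, hL1, zero_dotProduct]

lemma PosSemidef.smul_diag_eq_zero_of_sq_mul_trace_eq_zero {L : Matrix ι ι ℝ}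
    (hL : L.PosSemidef) {s : ℝ} (h : s ^ 2 * L.trace = 0) : s • L.diag = 0 := by
  rw [trace, Finset.mul_sum] at h
  ext i
  have := (Finset.sum_eq_zero_iff_of_nonneg fun j _ => mul_nonneg (sq_nonneg s)
    hL.diag_nonneg).mp h i (Finset.mem_univ i)
  simpa using this

variable [DecidableEq ι]

def gedm (L : Matrix ι ι ℝ) (α β γ : ℝ) : Matrix ι ι ℝ :=
  α • (diagonal L.diag * of fun _ _ => 1) + β • (of (fun _ _ => 1) * diagonal L.diag) - γ • L

lemma gedm_mulVec (L : Matrix ι ι ℝ) (α β γ : ℝ) (x : ι → ℝ) :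
    gedm L α β γ *ᵥ x = (α * ∑ j, x j) • L.diag + (β * (L.diag ⬝ᵥ x)) • 1 - γ • (L *ᵥ x) := by
  ext i
  simp only [gedm, sub_mulVec, add_mulVec, smul_mulVec, ← mulVec_mulVec]
  simp [mulVec, dotProduct, Finset.mul_sum, mul_comm, mul_left_comm]

lemma gedm_mulVec_eq_zero_iff {L : Matrix ι ι ℝ} (hL : L.PosSemidef) (hL1 : L *ᵥ 1 = 0)
    {α β γ : ℝ} (hα : 0 < α) (hβ : 0 < β) (hγ : 0 < γ) (x : ι → ℝ) :
    gedm L α β γ *ᵥ x = 0 ↔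
      L *ᵥ x = 0 ∧ (∑ j, x j) • L.diag = 0 ∧ (L.diag ⬝ᵥ x) • (1 : ι → ℝ) = 0 := by
  set s := ∑ j, x j
  set t := L.diag ⬝ᵥ x
  refine ⟨fun h => ?_, fun ⟨hLx, hs, ht⟩ => ?_⟩
  rotate_left
  · rw [gedm_mulVec, hLx, mul_smul, hs, mul_smul, ht]
    simp
  rw [gedm_mulVec, sub_eq_zero] at h
  have h1 : α * s * L.trace + β * t * Fintype.card ι = 0 := by
    have := congrArg (1 ⬝ᵥ ·) h
    simp only [dotProduct_add, dotProduct_smul, smul_eq_mul, one_dotProduct_one,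
      (isHermitian_iff_isSymm.mp hL.1).one_dotProduct_mulVec_eq_zero hL1, mul_zero] at this
    rwa [one_dotProduct] at this
  have h2 : (α + β) * (s * t) = γ * (x ⬝ᵥ L *ᵥ x) := by
    have := congrArg (x ⬝ᵥ ·) h
    simp only [dotProduct_add, dotProduct_smul, smul_eq_mul, dotProduct_one] at this
    rw [dotProduct_comm x L.diag] at this
    linear_combination this
  have hq : 0 ≤ x ⬝ᵥ L *ᵥ x := by simpa using hL.dotProduct_mulVec_nonneg x
  have hst : 0 ≤ s * t := by
    refine nonneg_of_mul_nonneg_right ?_ (by positivity : 0 < α + β)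
    rw [h2]
    exact mul_nonneg hγ.le hq
  have hs : s • L.diag = 0 := by
    refine hL.smul_diag_eq_zero_of_sq_mul_trace_eq_zero ((mul_eq_zero.mp ?_).resolve_left hα.ne')
    have hsum : α * (s ^ 2 * L.trace) + β * Fintype.card ι * (s * t) = 0 := by
      linear_combination s * h1
    exact ((add_eq_zero_iff_of_nonneg
      (mul_nonneg hα.le (mul_nonneg (sq_nonneg s) hL.trace_nonneg))
      (mul_nonneg (by positivity) hst)).mp hsum).1
  have hst0 : s * t = 0 := by
    rw [← smul_eq_mul, ← smul_dotProduct, hs, zero_dotProduct]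
  have hLx : L *ᵥ x = 0 := by
    refine (hL.dotProduct_mulVec_zero_iff x).mp ?_
    rw [hst0, mul_zero] at h2
    simpa [hγ.ne'] using h2.symm
  refine ⟨hLx, hs, ?_⟩
  rw [hLx, smul_zero, mul_smul, hs, smul_zero, zero_add, mul_smul] at h
  exact (smul_eq_zero.mp h).resolve_left hβ.ne'

end Matrix

/-- The null space of the GEDM `D = a²L̃J + b²JL̃ - 2abL` equals the null space of
`E = L̃J + JL̃ - 2L`; in particular it does not depend on `a` and `b`. -/
theorem stmt11 (n : ℕ) (L : Matrix (Fin n) (Fin n) ℝ) (hL : L.PosSemidef)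
    (hL1 : L *ᵥ (fun _ => (1 : ℝ)) = 0)
    (a b : ℝ) (ha : 0 < a) (hb : 0 < b)
    (J Lt D E : Matrix (Fin n) (Fin n) ℝ)
    (hJ : J = Matrix.of fun _ _ => (1 : ℝ))
    (hLt : Lt = Matrix.diagonal fun i => L i i)
    (hDdef : D = a ^ 2 • (Lt * J) + b ^ 2 • (J * Lt) - (2 * a * b) • L)
    (hE : E = Lt * J + J * Lt - 2 • L) :
    {x : Fin n → ℝ | D *ᵥ x = 0} = {x : Fin n → ℝ | E *ᵥ x = 0} := by
  have hD : D = gedm L (a ^ 2) (b ^ 2) (2 * a * b) := by subst hDdef hJ hLt; rfl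
  have hE' : E = gedm L 1 1 2 := by
    subst hE hJ hLt
    rw [gedm, one_smul, one_smul, two_smul, two_smul]
    rfl
  rw [hD, hE']
  ext x
  exact (gedm_mulVec_eq_zero_iff hL hL1 (by positivity) (by positivity) (by positivity) x).trans
    (gedm_mulVec_eq_zero_iff hL hL1 one_pos one_pos two_pos x).symm
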